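/- arXiv:2402.11121 — 3 statements merged into one kernel-verified Lean document; each statement's English description precedes it below -/
import Mathlib

section
/- Let D = ℂ(x)[τ] be the skew polynomial ring with τ·f(x) = f(x+1)·τ. For difference operators L₁, L₂ ∈ D, L₁ is a right factor of L₂ (i.e., L₂ = Q·L₁ for some Q ∈ D) if and only if V(L₁) ⊆ V(L₂), where V(L) denotes the solution space of L in the sequence space S. -/
open Polynomial

noncomputable section

/-- The ring of complex-valued sequences. -/
abbrev CSeq := ℕ → ℂ

/-- The ideal of sequences that are nonzero at only finitely many indices. -/
def finIdeal : Ideal CSeq where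
  carrier := {u | (Function.support u).Finite}
  add_mem' := by
    intro u v hu hv
    exact (hu.union hv).subset (Function.support_add _ _)
  zero_mem' := by simp [Function.support_zero]
  smul_mem' := by
    intro c u hu
    refine hu.subset ?_
    intro x hx
    simp only [Function.mem_support] at hx ⊢
    intro h0
    exact hx (by simp [Pi.smul_apply, smul_eq_mul, h0])

/-- `S = ℂ^ℕ/∼`, sequences modulo those with finite support. -/
abbrev SeqQ := CSeq ⧸ finIdeal

/-- The shift on sequences. -/
def shiftHom : CSeq →+* CSeq where
  toFun u := fun n => u (n + 1)
  map_one' := rfl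
  map_mul' _ _ := rfl
  map_zero' := rfl
  map_add' _ _ := rfl

lemma shift_mem (u : CSeq) (hu : u ∈ finIdeal) : shiftHom u ∈ finIdeal := by
  have : Function.support (shiftHom u) ⊆ (fun n => n + 1) ⁻¹' Function.support u := by
    intro x hx; exact hx
  exact (hu.preimage (fun a _ b _ h => by omega)).subset this

/-- The shift operator `τ` on `S`, as a ring homomorphism. -/
def tauHom : SeqQ →+* SeqQ :=
  Ideal.Quotient.lift finIdeal ((Ideal.Quotient.mk finIdeal).comp shiftHom)
    (fun u hu => by
      show Ideal.Quotient.mk finIdeal (shiftHom u) = 0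
      exact Ideal.Quotient.eq_zero_iff_mem.mpr (shift_mem u hu))

/-- The shift operator `τ` on `S`, as a `ℂ`-linear endomorphism. -/
def tauL : Module.End ℂ SeqQ where
  toFun := tauHom
  map_add' := map_add _
  map_smul' c x := by
    obtain ⟨u, rfl⟩ := Ideal.Quotient.mk_surjective x
    rfl

/-- Evaluation of a rational function along `ℕ` (junk value `0` at poles). -/
def evalRF (f : RatFunc ℂ) : CSeq := fun n => f.eval (RingHom.id ℂ) (n : ℂ)

/-- The image of a rational function in `S`. -/
def embRF (f : RatFunc ℂ) : SeqQ := Ideal.Quotient.mk _ (evalRF f)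

/-- Multiplication by (the image in `S` of) a rational function. -/
def mulOp (f : RatFunc ℂ) : Module.End ℂ SeqQ := LinearMap.mulLeft ℂ (embRF f)

/-- The substitution `x ↦ x + 1` on rational functions. -/
def sigmaRF (f : RatFunc ℂ) : RatFunc ℂ :=
  algebraMap (Polynomial ℂ) (RatFunc ℂ) (f.num.comp (X + 1)) /
    algebraMap (Polynomial ℂ) (RatFunc ℂ) (f.denom.comp (X + 1))

/-- The difference operator `Σ aᵢ τ^i` acting on `S`. -/
def applyOp {n : ℕ} (a : Fin (n + 1) → RatFunc ℂ) : Module.End ℂ SeqQ :=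
  ∑ i : Fin (n + 1), mulOp (a i) * tauL ^ (i : ℕ)

/-- The elements of `End(S)` that are difference operators, i.e. members of `D = ℂ(x)[τ]`. -/
def IsDiffOp (L : Module.End ℂ SeqQ) : Prop :=
  ∃ (n : ℕ) (a : Fin (n + 1) → RatFunc ℂ), L = applyOp a
/-!
Right division by `L₁`, whose leading coefficient is invertible in `ℂ(x)`, gives `L₂ = Q L₁ + R`
with `ord R < ord L₁ = n`, and `V(L₁) ⊆ V(L₂)` forces `V(L₁) ⊆ V(R)`. Solving the recurrence of
`L₁` forward from `n` independent initial values gives `n` elements of `V(L₁)`; they stay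
independent in `S` because a nonvanishing trailing coefficient propagates eventual vanishing
backwards. On the other hand an eventual solution of an operator of order `k` with nonzero leading
coefficient is determined by `k` consecutive values, so its solution space has dimension at most
`k`. Hence `R` has no nonzero coefficient.
-/

open Filter Finset Polynomial Fin.NatCast

local notation "M" => Ideal.Quotient.mk finIdeal

section Recurrence

variable {R : Type*}

def seqOp [CommSemiring R] (g : ℕ → ℕ → R) (N : ℕ) : (ℕ → R) →ₗ[R] (ℕ → R) where
  toFun u x := ∑ i ∈ range N, g i x * u (x + i)
  map_add' u v := by ext x; simp [mul_add, sum_add_distrib]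
  map_smul' c u := by ext x; simp [mul_sum, mul_left_comm]

lemma seqOp_apply [CommSemiring R] (g : ℕ → ℕ → R) (N : ℕ) (u : ℕ → R) (x : ℕ) :
    seqOp g N u x = ∑ i ∈ range N, g i x * u (x + i) := rfl

variable [CommSemiring R] [NoZeroDivisors R] {g : ℕ → ℕ → R} {k : ℕ} {w : ℕ → R}

lemma eq_zero_of_seqOp_eq_zero_of_init {x₁ : ℕ} (hrec : ∀ x ≥ x₁, seqOp g (k + 1) w x = 0)
    (hlead : ∀ x ≥ x₁, g k x ≠ 0) (hinit : ∀ t < k, w (x₁ + t) = 0) :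
    ∀ x ≥ x₁, w x = 0 := by
  intro x
  induction x using Nat.strong_induction_on with
  | _ x ih =>
  intro hx
  by_cases hxk : x < x₁ + k
  · simpa [Nat.add_sub_cancel' hx] using hinit (x - x₁) (by omega)
  · have h := hrec (x - k) (by omega)
    rw [seqOp_apply, sum_range_succ,
      sum_eq_zero fun i hi => by rw [ih _ (by simp at hi; omega) (by omega), mul_zero],
      zero_add, Nat.sub_add_cancel (by omega)] at h
    exact (mul_eq_zero.1 h).resolve_left (hlead _ (by omega))

lemma eq_zero_of_seqOp_eq_zero_of_eventually {x₀ : ℕ} (hrec : ∀ x ≥ x₀, seqOp g (k + 1) w x = 0)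
    (htrail : ∀ x ≥ x₀, g 0 x ≠ 0) (hw : ∀ᶠ x in atTop, w x = 0) :
    ∀ x ≥ x₀, w x = 0 := by
  obtain ⟨x₁, hx₁⟩ := eventually_atTop.1 hw
  suffices ∀ d, ∀ x ≥ x₀, x₁ ≤ x + d → w x = 0 from fun x hx => this x₁ x hx (by omega)
  intro d
  induction d with
  | zero => exact fun x _ h => hx₁ x h
  | succ d ih =>
    intro x hx hxd
    have h := hrec x hx
    rw [seqOp_apply, sum_range_succ',
      sum_eq_zero fun i _ => by rw [ih _ (by omega) (by omega), mul_zero], zero_add,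
      add_zero] at h
    exact (mul_eq_zero.1 h).resolve_left (htrail x hx)

end Recurrence

section Existence

variable {K : Type*} [Field K]

def recSol (g : ℕ → ℕ → K) (n x₀ : ℕ) (init : ℕ → K) : ℕ → K
  | x =>
    if _hx : x < x₀ + n then init (x - x₀)
    else -(∑ i ∈ (range n).attach, g i (x - n) * recSol g n x₀ init (x - n + i)) / g n (x - n)
  termination_by x => x
  decreasing_by have := mem_range.1 i.2; omega

lemma exists_seqOp_eq_zero (g : ℕ → ℕ → K) {n x₀ : ℕ} (hlead : ∀ x ≥ x₀, g n x ≠ 0)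
    (init : ℕ → K) :
    ∃ u : ℕ → K, (∀ t < n, u (x₀ + t) = init t) ∧ ∀ x ≥ x₀, seqOp g (n + 1) u x = 0 := by
  refine ⟨recSol g n x₀ init, fun t ht => ?_, fun x hx => ?_⟩
  · rw [recSol, dif_pos (by omega), Nat.add_sub_cancel_left]
  · have hstep : recSol g n x₀ init (x + n)
        = -(∑ i ∈ range n, g i x * recSol g n x₀ init (x + i)) / g n x := by
      rw [recSol, dif_neg (by omega), Nat.add_sub_cancel,
        ← sum_attach (range n) (fun i => g i x * recSol g n x₀ init (x + i))]
    rw [seqOp_apply, sum_range_succ, hstep, mul_div_cancel₀ _ (hlead x hx), add_neg_cancel]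

end Existence

lemma Polynomial.eventually_eval_natCast_ne_zero {R : Type*} [CommRing R] [IsDomain R]
    [CharZero R] {p : R[X]} (hp : p ≠ 0) : ∀ᶠ x : ℕ in atTop, p.eval (x : R) ≠ 0 := by
  rw [← Nat.cofinite_eq_atTop]
  exact ((finite_setOfPred_isRoot hp).preimage Nat.cast_injective.injOn).eventually_cofinite_notMem

section Evaluation

lemma eventually_evalRF_ne_zero {f : RatFunc ℂ} (hf : f ≠ 0) :
    ∀ᶠ x in atTop, evalRF f x ≠ 0 := by
  filter_upwards [eventually_eval_natCast_ne_zero (RatFunc.num_ne_zero hf),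
    eventually_eval_natCast_ne_zero f.denom_ne_zero] with x hn hd
  exact div_ne_zero hn hd

lemma eventually_evalRF_add (f g : RatFunc ℂ) :
    ∀ᶠ x in atTop, evalRF (f + g) x = evalRF f x + evalRF g x := by
  filter_upwards [eventually_eval_natCast_ne_zero f.denom_ne_zero,
    eventually_eval_natCast_ne_zero g.denom_ne_zero] with x hf hg
  exact RatFunc.eval_add _ _ hf hg

lemma eventually_evalRF_mul (f g : RatFunc ℂ) :
    ∀ᶠ x in atTop, evalRF (f * g) x = evalRF f x * evalRF g x := by
  filter_upwards [eventually_eval_natCast_ne_zero f.denom_ne_zero,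
    eventually_eval_natCast_ne_zero g.denom_ne_zero] with x hf hg
  exact RatFunc.eval_mul _ _ hf hg

lemma evalRF_algebraMap (p : ℂ[X]) (x : ℕ) :
    evalRF (algebraMap ℂ[X] (RatFunc ℂ) p) x = p.eval (x : ℂ) := by
  rw [evalRF, RatFunc.eval_algebraMap]
  rfl

lemma eventually_evalRF_sigmaRF (f : RatFunc ℂ) :
    ∀ᶠ x in atTop, evalRF (sigmaRF f) x = evalRF f (x + 1) := by
  have hq : f.denom.comp (X + 1) ≠ 0 := by
    simpa using (comp_X_add_C_ne_zero_iff (t := (1 : ℂ))).2 f.denom_ne_zero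
  have hσ : sigmaRF f * algebraMap ℂ[X] (RatFunc ℂ) (f.denom.comp (X + 1)) =
      algebraMap ℂ[X] (RatFunc ℂ) (f.num.comp (X + 1)) :=
    div_mul_cancel₀ _ (RatFunc.algebraMap_ne_zero hq)
  filter_upwards [eventually_evalRF_mul (sigmaRF f) (algebraMap _ _ (f.denom.comp (X + 1))),
    eventually_eval_natCast_ne_zero hq] with x hmul hx
  rw [hσ, evalRF_algebraMap, evalRF_algebraMap] at hmul
  rw [eq_div_of_mul_eq hx hmul.symm]
  show _ = f.num.eval ((x + 1 : ℕ) : ℂ) / f.denom.eval ((x + 1 : ℕ) : ℂ)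
  simp [eval_comp]

lemma eventually_evalRF_sigmaRF_iterate (i : ℕ) (f : RatFunc ℂ) :
    ∀ᶠ x in atTop, evalRF (sigmaRF^[i] f) x = evalRF f (x + i) := by
  induction i with
  | zero => simp
  | succ i ih =>
    filter_upwards [eventually_evalRF_sigmaRF (sigmaRF^[i] f),
      (tendsto_add_atTop_nat 1).eventually ih] with x h1 h2
    rw [Function.iterate_succ_apply', h1, h2, add_assoc, add_comm 1 i]

lemma sigmaRF_iterate_ne_zero (i : ℕ) {f : RatFunc ℂ} (hf : f ≠ 0) : sigmaRF^[i] f ≠ 0 := by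
  intro h
  obtain ⟨x, hσ, hne⟩ := ((eventually_evalRF_sigmaRF_iterate i f).and
    ((tendsto_add_atTop_nat i).eventually (eventually_evalRF_ne_zero hf))).exists
  rw [h, show evalRF 0 x = 0 by simp [evalRF]] at hσ
  exact hne hσ.symm

end Evaluation

section Operators

lemma mk_eq_zero_iff {u : CSeq} : M u = 0 ↔ ∀ᶠ x in atTop, u x = 0 := by
  rw [Ideal.Quotient.eq_zero_iff_mem, ← Nat.cofinite_eq_atTop, eventually_cofinite]
  rfl

lemma mk_eq_mk_of_eventuallyEq {u v : CSeq} (h : u =ᶠ[atTop] v) : M u = M v := by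
  rw [← sub_eq_zero, ← map_sub, mk_eq_zero_iff]
  filter_upwards [h] with x hx
  simp [hx]

lemma mk_sum_smul {ι : Type*} (s : Finset ι) (γ : ι → ℂ) (u : ι → CSeq) :
    M (∑ j ∈ s, γ j • u j) = ∑ j ∈ s, γ j • M (u j) := by
  rw [map_sum]
  exact sum_congr rfl fun j _ => map_smul (Ideal.Quotient.mkₐ ℂ finIdeal) (γ j) (u j)

def embRingHom : RatFunc ℂ →+* SeqQ where
  toFun := embRF
  map_one' := congrArg M (funext fun x => by simp [evalRF])
  map_zero' := congrArg M (funext fun x => by simp [evalRF])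
  map_mul' f g := by
    rw [embRF, embRF, embRF, ← map_mul]
    exact mk_eq_mk_of_eventuallyEq (eventually_evalRF_mul f g)
  map_add' f g := by
    rw [embRF, embRF, embRF, ← map_add]
    exact mk_eq_mk_of_eventuallyEq (eventually_evalRF_add f g)

lemma mulOp_zero : mulOp 0 = 0 :=
  LinearMap.ext fun v => by
    rw [mulOp, LinearMap.mulLeft_apply, show embRF 0 = 0 from map_zero embRingHom, zero_mul,
      LinearMap.zero_apply]

lemma mulOp_sub (f g : RatFunc ℂ) : mulOp (f - g) = mulOp f - mulOp g :=
  LinearMap.ext fun v => by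
    rw [LinearMap.sub_apply, mulOp, mulOp, mulOp, LinearMap.mulLeft_apply,
      LinearMap.mulLeft_apply, LinearMap.mulLeft_apply,
      show embRF (f - g) = embRF f - embRF g from map_sub embRingHom f g, sub_mul]

lemma mulOp_mul (f g : RatFunc ℂ) : mulOp (f * g) = mulOp f * mulOp g :=
  LinearMap.ext fun v => by
    rw [Module.End.mul_apply, mulOp, mulOp, mulOp, LinearMap.mulLeft_apply,
      LinearMap.mulLeft_apply, LinearMap.mulLeft_apply,
      show embRF (f * g) = embRF f * embRF g from map_mul embRingHom f g, mul_assoc]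

lemma mulOp_mk (f : RatFunc ℂ) (u : CSeq) : mulOp f (M u) = M (evalRF f * u) := by
  rw [mulOp, LinearMap.mulLeft_apply, embRF, ← map_mul]

lemma tauL_pow_mk (i : ℕ) (u : CSeq) : (tauL ^ i) (M u) = M (fun x => u (x + i)) := by
  induction i generalizing u with
  | zero => rfl
  | succ i ih => rw [pow_succ, Module.End.mul_apply]; exact ih _

lemma tauL_pow_mul_mulOp (i : ℕ) (f : RatFunc ℂ) :
    tauL ^ i * mulOp f = mulOp (sigmaRF^[i] f) * tauL ^ i := by
  refine LinearMap.ext fun v => ?_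
  obtain ⟨u, rfl⟩ := Ideal.Quotient.mk_surjective v
  simp only [Module.End.mul_apply, mulOp_mk, tauL_pow_mk]
  apply mk_eq_mk_of_eventuallyEq
  filter_upwards [eventually_evalRF_sigmaRF_iterate i f] with x hx
  simp [hx]

end Operators

section Division

def opSum (N : ℕ) (c : ℕ → RatFunc ℂ) : Module.End ℂ SeqQ :=
  ∑ i ∈ range N, mulOp (c i) * tauL ^ i

lemma opSum_succ (N : ℕ) (c : ℕ → RatFunc ℂ) :
    opSum (N + 1) c = opSum N c + mulOp (c N) * tauL ^ N :=
  sum_range_succ _ _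

lemma opSum_congr {N : ℕ} {c c' : ℕ → RatFunc ℂ} (h : ∀ i < N, c i = c' i) :
    opSum N c = opSum N c' :=
  sum_congr rfl fun i hi => by rw [h i (mem_range.1 hi)]

lemma opSum_sub (N : ℕ) (c c' : ℕ → RatFunc ℂ) :
    opSum N (c - c') = opSum N c - opSum N c' := by
  simp only [opSum, Pi.sub_apply, mulOp_sub, sub_mul, sum_sub_distrib]

lemma opSum_mk (N : ℕ) (c : ℕ → RatFunc ℂ) (u : CSeq) :
    opSum N c (M u) = M (seqOp (fun i => evalRF (c i)) N u) := by
  simp only [opSum, LinearMap.sum_apply, Module.End.mul_apply, tauL_pow_mk, mulOp_mk, ← map_sum]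
  congr 1
  ext x
  simp [seqOp_apply]

lemma applyOp_eq_opSum {n : ℕ} (a : Fin (n + 1) → RatFunc ℂ) (c : ℕ → RatFunc ℂ)
    (h : ∀ i : Fin (n + 1), c i = a i) : applyOp a = opSum (n + 1) c := by
  rw [applyOp, opSum, ← Fin.sum_univ_eq_sum_range (fun i => mulOp (c i) * tauL ^ i)]
  simp only [h]

lemma applyOp_eq_opSum_natCast {n : ℕ} (a : Fin (n + 1) → RatFunc ℂ) :
    applyOp a = opSum (n + 1) fun i : ℕ => a (i : Fin (n + 1)) :=
  applyOp_eq_opSum a _ fun i => by rw [Fin.cast_val_eq_self]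

lemma isDiffOp_opSum (N : ℕ) (c : ℕ → RatFunc ℂ) : IsDiffOp (opSum N c) := by
  cases N with
  | zero => exact ⟨0, 0, by simp [opSum, applyOp, mulOp_zero]⟩
  | succ m => exact ⟨m, fun i => c i, (applyOp_eq_opSum _ c fun _ => rfl).symm⟩

lemma mulOp_mul_tauL_pow_mul_opSum (d : RatFunc ℂ) (s N : ℕ) (c : ℕ → RatFunc ℂ) :
    mulOp d * tauL ^ s * opSum N c =
      opSum (s + N) fun i => if s ≤ i then d * sigmaRF^[s] (c (i - s)) else 0 := by
  rw [opSum, opSum, mul_sum, sum_range_add, sum_eq_zero (s := range s) fun i hi => by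
    rw [if_neg (by simpa using hi), mulOp_zero, zero_mul], zero_add]
  refine sum_congr rfl fun i _ => ?_
  rw [if_pos (Nat.le_add_right s i), Nat.add_sub_cancel_left, mulOp_mul, pow_add]
  simp only [mul_assoc]
  rw [← mul_assoc (tauL ^ s), tauL_pow_mul_mulOp, mul_assoc]

theorem exists_opSum_eq_mul_applyOp_add {n : ℕ} (a : Fin (n + 1) → RatFunc ℂ)
    (han : a (Fin.last n) ≠ 0) (N : ℕ) (c : ℕ → RatFunc ℂ) :
    ∃ q, ∃ K ≤ n, ∃ r, opSum N c = opSum (N - n) q * applyOp a + opSum K r := by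
  induction N generalizing c with
  | zero => exact ⟨0, 0, Nat.zero_le _, c, by simp [opSum]⟩
  | succ N ih =>
    by_cases hN : N + 1 ≤ n
    · exact ⟨0, N + 1, hN, c, by simp [opSum, Nat.sub_eq_zero_of_le hN]⟩
    set s := N - n
    have hσ : sigmaRF^[s] (a (Fin.last n)) ≠ 0 := sigmaRF_iterate_ne_zero s han
    set d := c N / sigmaRF^[s] (a (Fin.last n))
    obtain ⟨e, he⟩ : ∃ e, mulOp d * tauL ^ s * applyOp a = opSum N e + mulOp (c N) * tauL ^ N := by
      rw [applyOp_eq_opSum_natCast, mulOp_mul_tauL_pow_mul_opSum,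
        ← add_assoc, show s + n = N by omega, opSum_succ, if_pos (by omega),
        show N - s = n by omega, Fin.natCast_eq_last, div_mul_cancel₀ _ hσ]
      exact ⟨_, rfl⟩
    obtain ⟨q, K, hK, r, hqr⟩ := ih (c - e)
    refine ⟨Function.update q s d, K, hK, r, ?_⟩
    have hQ : opSum (N + 1 - n) (Function.update q s d) = opSum (N - n) q + mulOp d * tauL ^ s := by
      rw [show N + 1 - n = s + 1 by omega, opSum_succ, Function.update_self,
        opSum_congr fun i hi => Function.update_of_ne (Nat.ne_of_lt hi) _ _]
    rw [hQ, add_mul, add_right_comm, ← hqr, opSum_sub, he, opSum_succ]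
    abel

end Division

section Kernels

lemma natCast_le_rank_ker_applyOp {n : ℕ} (a : Fin (n + 1) → RatFunc ℂ) (ha0 : a 0 ≠ 0)
    (han : a (Fin.last n) ≠ 0) : (n : Cardinal) ≤ Module.rank ℂ (LinearMap.ker (applyOp a)) := by
  set g : ℕ → ℕ → ℂ := fun i : ℕ => evalRF (a (i : Fin (n + 1)))
  have hA : ∀ u, applyOp a (M u) = M (seqOp g (n + 1) u) := fun u => by
    rw [applyOp_eq_opSum_natCast, opSum_mk]
  obtain ⟨x₀, hx₀⟩ := eventually_atTop.1
    ((eventually_evalRF_ne_zero han).and (eventually_evalRF_ne_zero ha0))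
  have hlead : ∀ x ≥ x₀, g n x ≠ 0 := fun x hx => by simpa [g] using (hx₀ x hx).1
  have htrail : ∀ x ≥ x₀, g 0 x ≠ 0 := fun x hx => by simpa [g] using (hx₀ x hx).2
  choose u hu_init hu_rec using fun j : Fin n =>
    exists_seqOp_eq_zero g hlead fun t => if t = j then 1 else 0
  have hmem : ∀ j, M (u j) ∈ LinearMap.ker (applyOp a) := fun j => by
    rw [LinearMap.mem_ker, hA, mk_eq_zero_iff]
    exact eventually_atTop.2 ⟨x₀, hu_rec j⟩
  have hli : LinearIndependent ℂ fun j => (⟨M (u j), hmem j⟩ : LinearMap.ker (applyOp a)) := by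
    rw [Fintype.linearIndependent_iff]
    intro γ hγ
    set w := ∑ j, γ j • u j
    have hw_rec : ∀ x ≥ x₀, seqOp g (n + 1) w x = 0 := fun x hx => by
      simp [w, map_sum, hu_rec _ x hx]
    have hw_ev : ∀ᶠ x in atTop, w x = 0 := by
      rw [← mk_eq_zero_iff, mk_sum_smul]
      simpa using congrArg Subtype.val hγ
    have hw := eq_zero_of_seqOp_eq_zero_of_eventually hw_rec htrail hw_ev
    intro j
    simpa [w, hu_init, Fin.val_inj] using hw (x₀ + j) (by omega)
  simpa using hli.cardinal_le_rank

lemma rank_ker_opSum_le (k : ℕ) (c : ℕ → RatFunc ℂ) (hc : c k ≠ 0) :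
    Module.rank ℂ (LinearMap.ker (opSum (k + 1) c)) ≤ k := by
  set g : ℕ → ℕ → ℂ := fun i => evalRF (c i)
  apply rank_le
  intro s hs
  choose u hu using fun v : s => Ideal.Quotient.mk_surjective v.1.1
  have hev : ∀ᶠ x in atTop, g k x ≠ 0 ∧ ∀ v : s, seqOp g (k + 1) (u v) x = 0 := by
    refine (eventually_evalRF_ne_zero hc).and (eventually_all.2 fun v => ?_)
    rw [← mk_eq_zero_iff, ← opSum_mk, hu]
    exact v.1.2
  obtain ⟨x₁, hx₁⟩ := eventually_atTop.1 hev
  have hli : LinearIndependent ℂ fun (v : s) (t : Fin k) => u v (x₁ + t) := by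
    rw [Fintype.linearIndependent_iff]
    intro γ hγ
    set w := ∑ v, γ v • u v
    have hw := eq_zero_of_seqOp_eq_zero_of_init (w := w) (x₁ := x₁)
      (fun x hx => by simp [w, map_sum, (hx₁ x hx).2]) (fun x hx => (hx₁ x hx).1)
      (fun t ht => by simpa [w] using congrFun hγ ⟨t, ht⟩)
    refine Fintype.linearIndependent_iff.1 hs γ (Subtype.ext ?_)
    have hw0 : M w = 0 := mk_eq_zero_iff.2 (eventually_atTop.2 ⟨x₁, hw⟩)
    rw [mk_sum_smul] at hw0
    simpa only [Submodule.coe_sum, Submodule.coe_smul, hu, ZeroMemClass.coe_zero] using hw0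
  have hcard := hli.fintype_card_le_finrank
  rwa [Module.finrank_fin_fun, Fintype.card_coe] at hcard

lemma opSum_eq_zero_of_ker_le {n : ℕ} (a : Fin (n + 1) → RatFunc ℂ) (ha0 : a 0 ≠ 0)
    (han : a (Fin.last n) ≠ 0) {K : ℕ} (hK : K ≤ n) (r : ℕ → RatFunc ℂ)
    (hker : LinearMap.ker (applyOp a) ≤ LinearMap.ker (opSum K r)) : opSum K r = 0 := by
  induction K with
  | zero => simp [opSum]
  | succ K ih =>
    by_cases hr : r K = 0
    · rw [opSum_succ, hr, mulOp_zero, zero_mul, add_zero] at hker ⊢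
      exact ih (by omega) hker
    · have := (natCast_le_rank_ker_applyOp a ha0 han).trans
        ((Submodule.rank_mono hker).trans (rank_ker_opSum_le K r hr))
      norm_cast at this
      omega

end Kernels

theorem stmt2_general (n m : ℕ) (a : Fin (n + 1) → RatFunc ℂ) (b : Fin (m + 1) → RatFunc ℂ)
    (ha0 : a 0 ≠ 0) (han : a (Fin.last n) ≠ 0) :
    (∃ Q : Module.End ℂ SeqQ, IsDiffOp Q ∧ applyOp b = Q * applyOp a) ↔
      LinearMap.ker (applyOp a) ≤ LinearMap.ker (applyOp b) := by
  constructor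
  · rintro ⟨Q, -, hQ⟩ u hu
    rw [LinearMap.mem_ker] at hu ⊢
    rw [hQ, Module.End.mul_apply, hu, map_zero]
  · intro hker
    obtain ⟨q, K, hK, r, hdiv⟩ := exists_opSum_eq_mul_applyOp_add a han (m + 1) _
    rw [← applyOp_eq_opSum_natCast b] at hdiv
    have hr : opSum K r = 0 := opSum_eq_zero_of_ker_le a ha0 han hK r fun u hu => by
      have hb := hker hu
      rw [LinearMap.mem_ker, hdiv, LinearMap.add_apply, Module.End.mul_apply,
        LinearMap.mem_ker.1 hu, map_zero, zero_add] at hb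
      exact hb
    exact ⟨_, isDiffOp_opSum _ q, by rw [hdiv, hr, add_zero]⟩

/-- `L₁` is a right factor of `L₂` iff `V(L₁) ⊆ V(L₂)`. -/
theorem stmt2 (n m : ℕ) (a : Fin (n + 1) → RatFunc ℂ) (b : Fin (m + 1) → RatFunc ℂ)
    (ha0 : a 0 ≠ 0) (han : a (Fin.last n) ≠ 0)
    (hb0 : b 0 ≠ 0) (hbm : b (Fin.last m) ≠ 0) :
    (∃ Q : Module.End ℂ SeqQ, IsDiffOp Q ∧ applyOp b = Q * applyOp a) ↔
      LinearMap.ker (applyOp a) ≤ LinearMap.ker (applyOp b) :=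
  stmt2_general n m a b ha0 han
end
end

section
/- Let b : ℕ → ℤ be the central trinomial coefficients, defined by b(0) = b(1) = 1 and (n+1)b(n+1) = (2n+1)b(n) + 3n·b(n−1) for n ≥ 1, and define a(n) = (b(n)² + 3b(n−1)²)/4 for n ≥ 1. Then a satisfies the third-order recurrence (2n+1)(n+3)² a(n+3) = (2n+1)(7n² + 38n + 52) a(n+2) + 3(2n+5)(7n² + 4n + 1) a(n+1) − 27(2n+5) n² a(n) for all n ≥ 1, and a(n) is an odd positive integer for every n ≥ 1. -/
open Finset

/-- summand of the central trinomial coefficient -/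
def ctf (n k : ℕ) : ℤ := (n.choose (2*k) : ℤ) * ((2*k).choose k : ℤ)

/-- telescoping certificate term -/
def ctg (n k : ℕ) : ℤ := 2 * (k : ℤ) * (n.choose (2*k-1) : ℤ) * ((2*k).choose k : ℤ)

/-- central trinomial coefficients -/
def ct (n : ℕ) : ℤ := ∑ k ∈ Finset.range (n+1), ctf n k

lemma central_succ (k : ℕ) :
    ((2*k+2).choose (k+1) : ℤ) * ((k:ℤ)+1)^2
      = (2*(k:ℤ)+2)*(2*(k:ℤ)+1)*((2*k).choose k : ℤ) := by
  have h1 := Nat.add_one_mul_choose_eq (2*k+1) k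
  have h2 := Nat.add_one_mul_choose_eq (2*k) k
  rw [show 2*k+1+1 = 2*k+2 by omega] at h1
  have h3 : (2*k+1).choose (k+1) = (2*k+1).choose k := by
    rw [← Nat.choose_symm (by omega : k ≤ 2*k+1)]
    congr 1
    omega
  have h1' : (2*(k:ℤ)+2) * ((2*k+1).choose k : ℤ) = ((2*k+2).choose (k+1) : ℤ) * ((k:ℤ)+1) := by
    exact_mod_cast h1
  have h2' : (2*(k:ℤ)+1) * ((2*k).choose k : ℤ) = ((2*k+1).choose (k+1) : ℤ) * ((k:ℤ)+1) := by
    exact_mod_cast h2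
  have h3' : ((2*k+1).choose (k+1) : ℤ) = ((2*k+1).choose k : ℤ) := by exact_mod_cast h3
  linear_combination (-((k:ℤ)+1))*h1' - (2*(k:ℤ)+2)*h2' - (2*(k:ℤ)+2)*((k:ℤ)+1)*h3'

lemma ct_key (n k : ℕ) (hn : 1 ≤ n) :
    ((n:ℤ)+1) * ctf (n+1) k - (2*(n:ℤ)+1) * ctf n k - 3*(n:ℤ) * ctf (n-1) k
      = ctg n k - ctg n (k+1) := by
  unfold ctf ctg
  rcases Nat.lt_or_ge n (2*k) with hcase | hcase
  · rcases Nat.lt_or_ge (n+1) (2*k) with hc2 | hc2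
    · -- 2k ≥ n+2 : everything vanishes
      have c1 : (n+1).choose (2*k) = 0 := Nat.choose_eq_zero_of_lt (by omega)
      have c2 : n.choose (2*k) = 0 := Nat.choose_eq_zero_of_lt (by omega)
      have c3 : (n-1).choose (2*k) = 0 := Nat.choose_eq_zero_of_lt (by omega)
      have c4 : n.choose (2*k-1) = 0 := Nat.choose_eq_zero_of_lt (by omega)
      have c5 : n.choose (2*(k+1)-1) = 0 := Nat.choose_eq_zero_of_lt (by omega)
      rw [c1, c2, c3, c4, c5]
      push_cast
      ring
    · -- 2k = n+1
      have h2k : 2*k = n+1 := by omega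
      have c2 : n.choose (2*k) = 0 := Nat.choose_eq_zero_of_lt (by omega)
      have c3 : (n-1).choose (2*k) = 0 := Nat.choose_eq_zero_of_lt (by omega)
      have c5 : n.choose (2*(k+1)-1) = 0 := Nat.choose_eq_zero_of_lt (by omega)
      have c1 : (n+1).choose (2*k) = 1 := by rw [h2k]; exact Nat.choose_self _
      have c4 : n.choose (2*k-1) = 1 := by
        rw [show 2*k-1 = n by omega]; exact Nat.choose_self n
      rw [c1, c2, c3, c4, c5]
      have hk : (2:ℤ)*(k:ℤ) = (n:ℤ)+1 := by exact_mod_cast h2k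
      push_cast
      linear_combination (-(((2*k).choose k : ℤ))) * hk
  · rcases Nat.eq_zero_or_pos k with rfl | hk1
    · norm_num [Nat.choose_one_right]
      ring
    · -- main case : 1 ≤ k, 2k ≤ n
      rw [show 2*(k+1)-1 = 2*k+1 by omega, show 2*(k+1) = 2*k+2 by omega]
      have hA := Nat.choose_mul_succ_eq n (2*k)
      have hB := Nat.choose_mul_succ_eq (n-1) (2*k)
      rw [show n-1+1 = n by omega] at hB
      have hC := Nat.choose_succ_right_eq n (2*k)
      have hE := Nat.choose_succ_right_eq n (2*k-1)
      rw [show 2*k-1+1 = 2*k by omega] at hE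
      have hD := central_succ k
      qify [show 2*k ≤ n+1 by omega] at hA
      qify [show 2*k ≤ n from hcase] at hB hC
      qify [show 2*k-1 ≤ n by omega, show 1 ≤ 2*k by omega] at hE
      have hn1 : (1:ℚ) ≤ (n:ℚ) := by exact_mod_cast hn
      have hkn : (2*(k:ℚ)) ≤ (n:ℚ) := by exact_mod_cast hcase
      have d1 : ((n:ℚ)+1-2*(k:ℚ)) ≠ 0 := by intro h; nlinarith
      have d2 : ((n:ℚ)) ≠ 0 := by intro h; nlinarith
      have d3 : (2*(k:ℚ)+1) ≠ 0 := by positivity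
      have d4 : ((n:ℚ)-2*(k:ℚ)+1) ≠ 0 := by intro h; nlinarith
      have d5 : (((k:ℚ)+1)^2) ≠ 0 := by positivity
      have HA : (((n+1).choose (2*k) : ℕ) : ℚ)
          = ((n:ℚ)+1)*((n.choose (2*k) : ℕ) : ℚ)/((n:ℚ)+1-2*(k:ℚ)) := by
        rw [eq_div_iff d1]; linear_combination -hA
      have HB : (((n-1).choose (2*k) : ℕ) : ℚ)
          = ((n.choose (2*k) : ℕ) : ℚ)*((n:ℚ)-2*(k:ℚ))/(n:ℚ) := by
        rw [eq_div_iff d2]; linear_combination hB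
      have HC : ((n.choose (2*k+1) : ℕ) : ℚ)
          = ((n.choose (2*k) : ℕ) : ℚ)*((n:ℚ)-2*(k:ℚ))/(2*(k:ℚ)+1) := by
        rw [eq_div_iff d3]; linear_combination hC
      have HE : ((n.choose (2*k-1) : ℕ) : ℚ)
          = ((n.choose (2*k) : ℕ) : ℚ)*(2*(k:ℚ))/((n:ℚ)-2*(k:ℚ)+1) := by
        rw [eq_div_iff d4]; linear_combination -hE
      have HD : (((2*k+2).choose (k+1) : ℕ) : ℚ)
          = (2*(k:ℚ)+2)*(2*(k:ℚ)+1)*(((2*k).choose k : ℕ) : ℚ)/(((k:ℚ)+1)^2) := by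
        rw [eq_div_iff d5]
        have hD' : (((2*k+2).choose (k+1) : ℕ) : ℚ) * ((k:ℚ)+1)^2
            = (2*(k:ℚ)+2)*(2*(k:ℚ)+1)*(((2*k).choose k : ℕ) : ℚ) := by exact_mod_cast hD
        linear_combination hD'
      qify
      rw [HA, HB, HC, HE, HD]
      field_simp
      ring

lemma ct_eq (n N : ℕ) (h : n+1 ≤ N) : ct n = ∑ k ∈ Finset.range N, ctf n k := by
  rw [ct]
  apply Finset.sum_subset (Finset.range_subset_range.mpr h)
  intro k hkN hk
  have hlt : n < 2*k := by
    simp only [Finset.mem_range, not_lt] at hk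
    omega
  simp [ctf, Nat.choose_eq_zero_of_lt hlt]

lemma ct_rec (n : ℕ) (hn : 1 ≤ n) :
    ((n:ℤ)+1) * ct (n+1) = (2*(n:ℤ)+1) * ct n + 3*(n:ℤ) * ct (n-1) := by
  have hsum : ∑ k ∈ Finset.range (n+2),
      (((n:ℤ)+1) * ctf (n+1) k - (2*(n:ℤ)+1)*ctf n k - 3*(n:ℤ)*ctf (n-1) k)
      = ctg n 0 - ctg n (n+2) := by
    rw [show (∑ k ∈ Finset.range (n+2),
        (((n:ℤ)+1) * ctf (n+1) k - (2*(n:ℤ)+1)*ctf n k - 3*(n:ℤ)*ctf (n-1) k))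
        = ∑ k ∈ Finset.range (n+2), (ctg n k - ctg n (k+1)) from
      Finset.sum_congr rfl fun k _ => ct_key n k hn]
    exact Finset.sum_range_sub' (ctg n) (n+2)
  have hg0 : ctg n 0 = 0 := by simp [ctg]
  have hgN : ctg n (n+2) = 0 := by
    have : n.choose (2*(n+2)-1) = 0 := Nat.choose_eq_zero_of_lt (by omega)
    simp [ctg, this]
  rw [ct_eq (n+1) (n+2) (by omega), ct_eq n (n+2) (by omega), ct_eq (n-1) (n+2) (by omega)]
  rw [Finset.mul_sum, Finset.mul_sum, Finset.mul_sum]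
  simp only [Finset.sum_sub_distrib] at hsum
  rw [hg0, hgN] at hsum
  linarith [hsum]

lemma even_central (k : ℕ) : Even ((2*(k+1)).choose (k+1)) := by
  have h : (2*k+1).choose (k+1) = (2*k+1).choose k := by
    rw [← Nat.choose_symm (by omega : k ≤ 2*k+1)]
    congr 1
    omega
  rw [show 2*(k+1) = (2*k+1)+1 by omega, Nat.choose_succ_succ]
  simp only [Nat.succ_eq_add_one]
  exact ⟨(2*k+1).choose k, by omega⟩

lemma ct_odd (n : ℕ) : Odd (ct n) := by
  rw [ct, Finset.sum_range_succ']
  have h0 : ctf n 0 = 1 := by simp [ctf]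
  rw [h0]
  apply Even.add_one
  apply Finset.even_sum
  intro k _
  unfold ctf
  have h : Even (((2*(k+1)).choose (k+1) : ℕ) : ℤ) := by
    exact_mod_cast (even_central k)
  exact h.mul_left _

/-- with `b` the central trinomial coefficients and
`a(n) = (b(n)² + 3b(n-1)²)/4`, the number `a(n)` is a well-defined odd positive
integer for `n ≥ 1` and satisfies the stated third-order recurrence. -/
theorem stmt18 (b : ℕ → ℤ) (hb0 : b 0 = 1) (hb1 : b 1 = 1)
    (hbrec : ∀ n : ℕ, 1 ≤ n →
      ((n : ℤ) + 1) * b (n + 1) = (2 * (n : ℤ) + 1) * b n + 3 * (n : ℤ) * b (n - 1)) :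
    (∀ n : ℕ, 1 ≤ n → (4 : ℤ) ∣ (b n ^ 2 + 3 * b (n - 1) ^ 2)) ∧
    (∀ a : ℕ → ℤ, (∀ n : ℕ, 1 ≤ n → 4 * a n = b n ^ 2 + 3 * b (n - 1) ^ 2) →
      (∀ n : ℕ, 1 ≤ n →
        (2 * (n : ℤ) + 1) * ((n : ℤ) + 3) ^ 2 * a (n + 3) =
          (2 * (n : ℤ) + 1) * (7 * (n : ℤ) ^ 2 + 38 * (n : ℤ) + 52) * a (n + 2) +
          3 * (2 * (n : ℤ) + 5) * (7 * (n : ℤ) ^ 2 + 4 * (n : ℤ) + 1) * a (n + 1) -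
          27 * (2 * (n : ℤ) + 5) * (n : ℤ) ^ 2 * a n) ∧
      (∀ n : ℕ, 1 ≤ n → Odd (a n) ∧ 0 < a n)) := by
  -- b agrees with the central trinomial coefficients
  have hbct : ∀ m : ℕ, b m = ct m ∧ b (m+1) = ct (m+1) := by
    intro m
    induction m with
    | zero =>
      constructor
      · rw [hb0]; simp [ct, ctf]
      · rw [hb1]; norm_num [ct, ctf, Finset.sum_range_succ]
    | succ m ih =>
      refine ⟨ih.2, ?_⟩
      have e := hbrec (m+1) (by omega)
      have e' := ct_rec (m+1) (by omega)
      rw [show m+1+1 = m+2 from rfl, show m+1-1 = m from rfl] at e e'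
      rw [ih.1, ih.2] at e
      have hc : ((m:ℤ)+1+1) ≠ 0 := by positivity
      have : ((m:ℤ)+1+1) * b (m+2) = ((m:ℤ)+1+1) * ct (m+2) := by
        push_cast at e e'
        linear_combination e - e'
      exact mul_left_cancel₀ hc this
  have hb_odd : ∀ m : ℕ, Odd (b m) := by
    intro m
    rw [(hbct m).1]
    exact ct_odd m
  constructor
  · -- divisibility by 4
    intro n hn
    obtain ⟨s, hs⟩ := hb_odd n
    obtain ⟨t, ht⟩ := hb_odd (n-1)
    exact ⟨s^2+s+3*t^2+3*t+1, by rw [hs, ht]; ring⟩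
  · intro a ha
    constructor
    · -- the third-order recurrence
      intro n hn
      have e1 := hbrec n hn
      have e2 := hbrec (n+1) (by omega)
      have e3 := hbrec (n+2) (by omega)
      rw [show n+1+1 = n+2 from rfl, show n+1-1 = n from rfl] at e2
      rw [show n+2+1 = n+3 from rfl, show n+2-1 = n+1 from rfl] at e3
      have A0 := ha n hn
      have A1 := ha (n+1) (by omega)
      have A2 := ha (n+2) (by omega)
      have A3 := ha (n+3) (by omega)
      rw [show n+1-1 = n from rfl] at A1
      rw [show n+2-1 = n+1 from rfl] at A2
      rw [show n+3-1 = n+2 from rfl] at A3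
      push_cast at e2 e3
      have M1 : ((n:ℤ)+1)^2*(4*a (n+1))
          = ((2*(n:ℤ)+1)*b n+3*(n:ℤ)*b (n-1))^2 + 3*((n:ℤ)+1)^2*(b n)^2 := by
        linear_combination ((n:ℤ)+1)^2*A1
          + (((2*(n:ℤ)+1)*b n+3*(n:ℤ)*b (n-1)) + ((n:ℤ)+1)*b (n+1))*e1
      have M2 : (((n:ℤ)+1)*((n:ℤ)+2))^2*(4*a (n+2))
          = ((2*(n:ℤ)+3)*((2*(n:ℤ)+1)*b n+3*(n:ℤ)*b (n-1))+3*((n:ℤ)+1)^2*b n)^2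
            + 3*((n:ℤ)+2)^2*((2*(n:ℤ)+1)*b n+3*(n:ℤ)*b (n-1))^2 := by
        linear_combination (((n:ℤ)+1)*((n:ℤ)+2))^2*A2
          + (((2*(n:ℤ)+3)*((2*(n:ℤ)+1)*b n+3*(n:ℤ)*b (n-1))+3*((n:ℤ)+1)^2*b n)
              + ((n:ℤ)+1)*((n:ℤ)+2)*b (n+2))*(((n:ℤ)+1)*e2 + (2*(n:ℤ)+3)*e1)
          + 3*((n:ℤ)+2)^2*(((2*(n:ℤ)+1)*b n+3*(n:ℤ)*b (n-1)) + ((n:ℤ)+1)*b (n+1))*e1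
      have M3 : (((n:ℤ)+1)*((n:ℤ)+2)*((n:ℤ)+3))^2*(4*a (n+3))
          = ((2*(n:ℤ)+5)*((2*(n:ℤ)+3)*((2*(n:ℤ)+1)*b n+3*(n:ℤ)*b (n-1))+3*((n:ℤ)+1)^2*b n)
              +3*((n:ℤ)+2)^2*((2*(n:ℤ)+1)*b n+3*(n:ℤ)*b (n-1)))^2
            + 3*((n:ℤ)+3)^2*((2*(n:ℤ)+3)*((2*(n:ℤ)+1)*b n+3*(n:ℤ)*b (n-1))+3*((n:ℤ)+1)^2*b n)^2 := by
        linear_combination (((n:ℤ)+1)*((n:ℤ)+2)*((n:ℤ)+3))^2*A3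
          + (((2*(n:ℤ)+5)*((2*(n:ℤ)+3)*((2*(n:ℤ)+1)*b n+3*(n:ℤ)*b (n-1))+3*((n:ℤ)+1)^2*b n)
              +3*((n:ℤ)+2)^2*((2*(n:ℤ)+1)*b n+3*(n:ℤ)*b (n-1)))
              + ((n:ℤ)+1)*((n:ℤ)+2)*((n:ℤ)+3)*b (n+3))
            * (((n:ℤ)+1)*((n:ℤ)+2)*e3 + (2*(n:ℤ)+5)*(((n:ℤ)+1)*e2 + (2*(n:ℤ)+3)*e1)
               + 3*((n:ℤ)+2)^2*e1)
          + 3*((n:ℤ)+3)^2*(((2*(n:ℤ)+3)*((2*(n:ℤ)+1)*b n+3*(n:ℤ)*b (n-1))+3*((n:ℤ)+1)^2*b n)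
              + ((n:ℤ)+1)*((n:ℤ)+2)*b (n+2))*(((n:ℤ)+1)*e2+(2*(n:ℤ)+3)*e1)
      have hM : ((4:ℤ)*(((n:ℤ)+1)*((n:ℤ)+2)*((n:ℤ)+3))^2) ≠ 0 := by positivity
      apply mul_left_cancel₀ hM
      linear_combination (2*(n:ℤ)+1)*((n:ℤ)+3)^2*M3
        - ((n:ℤ)+3)^2*((2*(n:ℤ)+1)*(7*(n:ℤ)^2+38*(n:ℤ)+52))*M2
        - (((n:ℤ)+2)*((n:ℤ)+3))^2*(3*(2*(n:ℤ)+5)*(7*(n:ℤ)^2+4*(n:ℤ)+1))*M1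
        + (((n:ℤ)+1)*((n:ℤ)+2)*((n:ℤ)+3))^2*(27*(2*(n:ℤ)+5)*(n:ℤ)^2)*A0
    · -- oddness and positivity
      intro n hn
      have A0 := ha n hn
      obtain ⟨s, hs⟩ := hb_odd n
      obtain ⟨t, ht⟩ := hb_odd (n-1)
      constructor
      · obtain ⟨c, hc⟩ := Int.even_mul_succ_self s
        obtain ⟨d, hd⟩ := Int.even_mul_succ_self t
        refine ⟨c + 3*d, ?_⟩
        have h4 : 4 * a n = 4*(2*(c+3*d)+1) := by
          rw [A0, hs, ht]
          linear_combination 4*hc + 12*hd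
        linarith
      · have h1 : 1 ≤ b n ^ 2 := by
          rcases lt_trichotomy (b n) 0 with h | h | h
          · nlinarith
          · rw [h] at hs; omega
          · nlinarith
        have h2 : 0 ≤ b (n-1) ^ 2 := sq_nonneg _
        linarith
end

section
/- Let D : ℕ → ℤ be the central Delannoy numbers, defined by D(0) = 1, D(1) = 3, and n·D(n) = 3(2n−1)D(n−1) − (n−1)D(n−2) for n ≥ 2. Then for every n ≥ 1, 8·Σ_{k=0}^{n−1} (2k+1)·D(k)² = n²·(6·D(n)·D(n−1) − D(n)² − D(n−1)²). In particular, (1/n²)·Σ_{k=0}^{n−1}(2k+1)D(k)² = (6 D(n)D(n−1) − D(n)² − D(n−1)²)/8 is an integer for all n ≥ 1. -/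
open Finset

private def Cc (D : ℕ → ℤ) (n : ℕ) : ℤ := ∑ k ∈ range (n+1), D k * D (n - k)
private def Ss (D : ℕ → ℤ) (n : ℕ) : ℤ := ∑ k ∈ range (n+1), (k : ℤ) * (D k * D (n - k))

section Aux
variable (D : ℕ → ℤ)

private theorem twoS (n : ℕ) : (n : ℤ) * Cc D n = 2 * Ss D n := by
  have h2 : ∑ k ∈ range (n+1), (((n - k : ℕ)) : ℤ) * (D k * D (n - k)) = Ss D n := by
    have hrefl := Finset.sum_range_reflect (fun j : ℕ => (j : ℤ) * (D (n - j) * D j)) (n+1)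
    calc ∑ k ∈ range (n+1), (((n - k : ℕ)) : ℤ) * (D k * D (n - k))
        = ∑ k ∈ range (n+1), (fun j : ℕ => (j : ℤ) * (D (n - j) * D j)) (n + 1 - 1 - k) := by
          refine Finset.sum_congr rfl fun k hk => ?_
          simp only [mem_range] at hk
          have hk' : k ≤ n := by omega
          simp only [Nat.add_sub_cancel]
          rw [Nat.sub_sub_self hk']
      _ = ∑ k ∈ range (n+1), (k : ℤ) * (D (n - k) * D k) := hrefl
      _ = Ss D n := by
          unfold Ss
          exact Finset.sum_congr rfl fun k hk => by ring
  have h1 : (n : ℤ) * Cc D n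
      = Ss D n + ∑ k ∈ range (n+1), (((n - k : ℕ)) : ℤ) * (D k * D (n - k)) := by
    unfold Cc Ss
    rw [Finset.mul_sum, ← Finset.sum_add_distrib]
    refine Finset.sum_congr rfl fun k hk => ?_
    simp only [mem_range] at hk
    have hkn : k ≤ n := by omega
    have : (((n - k : ℕ)) : ℤ) = (n : ℤ) - k := by push_cast [hkn]; ring
    rw [this]; ring
  rw [h1, h2]; ring

variable (hD0 : D 0 = 1) (hD1 : D 1 = 3)
  (hDrec : ∀ n : ℕ, 2 ≤ n →
      (n : ℤ) * D n = 3 * (2 * (n : ℤ) - 1) * D (n - 1) - ((n : ℤ) - 1) * D (n - 2))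

include hD0 hD1 hDrec in
private theorem recD : ∀ j : ℕ, ((j : ℤ) + 1) * D (j+1)
    = 3 * (2 * (j : ℤ) + 1) * D j - (j : ℤ) * D (j - 1) := by
  intro j
  rcases j with _ | i
  · simp [hD0, hD1]
  · have h := hDrec (i + 2) (by omega)
    have e1 : i + 2 - 1 = i + 1 := by omega
    have e2 : i + 2 - 2 = i := by omega
    rw [e1, e2] at h
    push_cast at h ⊢
    have e4 : i + 1 + 1 = i + 2 := by omega
    rw [e4]
    linarith [h]

include hD0 hD1 hDrec in
private theorem sRec (m : ℕ) : Ss D (m+2)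
    = 6 * Ss D (m+1) + 3 * Cc D (m+1) - (Ss D m + Cc D m) := by
  have recD' := recD D hD0 hD1 hDrec
  have hT : ∑ k ∈ range (m+2), (k : ℤ) * (D (k-1) * D (m+1-k))
      = Ss D m + Cc D m := by
    rw [Finset.sum_range_succ' (fun k : ℕ => (k : ℤ) * (D (k-1) * D (m+1-k))) (m+1)]
    simp only [Nat.cast_zero, zero_mul, add_zero, Nat.cast_add, Nat.cast_one]
    unfold Ss Cc
    rw [← Finset.sum_add_distrib]
    refine Finset.sum_congr rfl fun k hk => ?_
    have e1 : k + 1 - 1 = k := by omega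
    have e2 : m + 1 - (k + 1) = m - k := by omega
    rw [e1, e2]; ring
  have h0 : Ss D (m+2)
      = ∑ k ∈ range (m+2), ((k : ℤ) + 1) * (D (k+1) * D (m+1-k)) := by
    unfold Ss
    rw [Finset.sum_range_succ' (fun k : ℕ => (k : ℤ) * (D k * D (m+2-k))) (m+2)]
    simp only [Nat.cast_zero, zero_mul, add_zero, Nat.cast_add, Nat.cast_one]
    refine Finset.sum_congr rfl fun k hk => ?_
    have e2 : m + 2 - (k + 1) = m + 1 - k := by omega
    rw [e2]
  rw [h0]
  have h1 : ∀ k ∈ range (m+2), ((k : ℤ) + 1) * (D (k+1) * D (m+1-k))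
      = 6 * ((k : ℤ) * (D k * D (m+1-k))) + 3 * (D k * D (m+1-k))
        - (k : ℤ) * (D (k-1) * D (m+1-k)) := by
    intro k hk
    have h := recD' k
    calc ((k : ℤ) + 1) * (D (k+1) * D (m+1-k))
        = (((k : ℤ) + 1) * D (k+1)) * D (m+1-k) := by ring
      _ = (3 * (2 * (k : ℤ) + 1) * D k - (k : ℤ) * D (k - 1)) * D (m+1-k) := by rw [h]
      _ = _ := by ring
  rw [Finset.sum_congr rfl h1]
  rw [Finset.sum_sub_distrib, Finset.sum_add_distrib, hT]
  unfold Ss Cc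
  rw [Finset.mul_sum, Finset.mul_sum]

include hD0 hD1 hDrec in
private theorem convRec (m : ℕ) : Cc D (m+2) = 6 * Cc D (m+1) - Cc D m := by
  have h2 := twoS D (m+2)
  have h1 := twoS D (m+1)
  have h0 := twoS D m
  have hs := sRec D hD0 hD1 hDrec m
  push_cast at h2 h1 h0
  have key : ((m : ℤ) + 2) * Cc D (m+2) = ((m : ℤ) + 2) * (6 * Cc D (m+1) - Cc D m) := by
    linear_combination h2 + 2 * hs - 6 * h1 + h0
  exact mul_left_cancel₀ (by positivity) key

include hD0 hD1 hDrec in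
private theorem cMod8 : ∀ m : ℕ, Cc D (2*m) % 8 = (2*(m:ℤ)+1) % 8
    ∧ Cc D (2*m+1) % 8 = (6-2*(m:ℤ)) % 8 := by
  intro m
  induction m with
  | zero =>
    constructor
    · rw [show 2*0 = 0 from rfl, show Cc D 0 = 1 by simp [Cc, hD0]]
      norm_num
    · rw [show 2*0+1 = 1 from rfl,
        show Cc D 1 = 6 by simp [Cc, Finset.sum_range_succ, hD0, hD1]]
      norm_num
  | succ p ih =>
    have e1 : Cc D (2*p+2) = 6 * Cc D (2*p+1) - Cc D (2*p) :=
      convRec D hD0 hD1 hDrec (2*p)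
    have e2 : Cc D (2*p+3) = 6 * Cc D (2*p+2) - Cc D (2*p+1) := by
      have := convRec D hD0 hD1 hDrec (2*p+1)
      convert this using 3 <;> omega
    have i1 := ih.1
    have i2 := ih.2
    constructor
    · have h : 2*(p+1) = 2*p+2 := by omega
      rw [h]; push_cast; omega
    · have h : 2*(p+1)+1 = 2*p+3 := by omega
      rw [h]; push_cast; omega

private theorem splitEven (m : ℕ) :
    Cc D (2*m) = D m * D m + 2 * ∑ k ∈ range m, D k * D (2*m - k) := by
  unfold Cc
  have hsplit : ∑ k ∈ range (2*m+1), D k * D (2*m - k)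
      = (∑ k ∈ range m, D k * D (2*m - k)) + ∑ k ∈ Ico m (2*m+1), D k * D (2*m - k) := by
    rw [Finset.range_eq_Ico, Finset.range_eq_Ico]
    exact (Finset.sum_Ico_consecutive (fun k => D k * D (2*m - k)) (Nat.zero_le m) (by omega : m ≤ 2*m+1)).symm
  have hbot : ∑ k ∈ Ico m (2*m+1), D k * D (2*m - k)
      = D m * D (2*m - m) + ∑ k ∈ Ico (m+1) (2*m+1), D k * D (2*m - k) :=
    Finset.sum_eq_sum_Ico_succ_bot (by omega) _
  have htop : ∑ k ∈ Ico (m+1) (2*m+1), D k * D (2*m - k)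
      = ∑ k ∈ range m, D k * D (2*m - k) := by
    rw [Finset.sum_Ico_eq_sum_range]
    have e : 2*m+1 - (m+1) = m := by omega
    rw [e]
    have hrefl := Finset.sum_range_reflect
      (fun j : ℕ => D (m+1+j) * D (2*m - (m+1+j))) m
    calc ∑ k ∈ range m, D (m+1+k) * D (2*m - (m+1+k))
        = ∑ k ∈ range m, (fun j : ℕ => D (m+1+j) * D (2*m - (m+1+j))) (m-1-k) :=
          hrefl.symm
      _ = ∑ k ∈ range m, D k * D (2*m - k) := by
          refine Finset.sum_congr rfl fun k hk => ?_
          simp only [mem_range] at hk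
          have e1 : m+1+(m-1-k) = 2*m - k := by omega
          have e2 : 2*m - (m+1+(m-1-k)) = k := by omega
          have e3 : 2*m - (2*m - k) = k := by omega
          simp only [e1, e2, e3]
          exact mul_comm _ _
  rw [hsplit, hbot, htop]
  have : 2*m - m = m := by omega
  rw [this]; ring

private theorem splitOdd (m : ℕ) :
    Cc D (2*m+1) = 2 * ∑ k ∈ range (m+1), D k * D (2*m+1 - k) := by
  unfold Cc
  have hsplit : ∑ k ∈ range (2*m+1+1), D k * D (2*m+1 - k)
      = (∑ k ∈ range (m+1), D k * D (2*m+1 - k))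
        + ∑ k ∈ Ico (m+1) (2*m+2), D k * D (2*m+1 - k) := by
    rw [Finset.range_eq_Ico, Finset.range_eq_Ico]
    exact (Finset.sum_Ico_consecutive (fun k => D k * D (2*m+1 - k)) (Nat.zero_le (m+1)) (by omega : m+1 ≤ 2*m+2)).symm
  have htop : ∑ k ∈ Ico (m+1) (2*m+2), D k * D (2*m+1 - k)
      = ∑ k ∈ range (m+1), D k * D (2*m+1 - k) := by
    rw [Finset.sum_Ico_eq_sum_range]
    have e : 2*m+2 - (m+1) = m+1 := by omega
    rw [e]
    have hrefl := Finset.sum_range_reflect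
      (fun j : ℕ => D (m+1+j) * D (2*m+1 - (m+1+j))) (m+1)
    calc ∑ k ∈ range (m+1), D (m+1+k) * D (2*m+1 - (m+1+k))
        = ∑ k ∈ range (m+1), (fun j : ℕ => D (m+1+j) * D (2*m+1 - (m+1+j))) (m+1-1-k) :=
          hrefl.symm
      _ = ∑ k ∈ range (m+1), D k * D (2*m+1 - k) := by
          refine Finset.sum_congr rfl fun k hk => ?_
          simp only [mem_range] at hk
          have e1 : m+1+(m+1-1-k) = 2*m+1 - k := by omega
          have e2 : 2*m+1 - (m+1+(m+1-1-k)) = k := by omega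
          have e3 : 2*m+1 - (2*m+1 - k) = k := by omega
          simp only [e1, e2, e3]
          exact mul_comm _ _
  rw [hsplit, htop]; ring

include hD0 hD1 hDrec in
private theorem dMod4 : ∀ n : ℕ, D n % 4 = if n % 2 = 0 then 1 else 3 := by
  have cMod8' := cMod8 D hD0 hD1 hDrec
  intro n
  induction n using Nat.strong_induction_on with
  | _ n ih =>
    rcases Nat.even_or_odd' n with ⟨m, hn | hn⟩
    · -- n = 2m
      subst hn
      rcases Nat.eq_zero_or_pos m with rfl | hm
      · simpa [hD0] using (by norm_num : (1:ℤ) % 4 = 1)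
      · obtain ⟨p, rfl⟩ : ∃ p, m = p + 1 := ⟨m - 1, by omega⟩
        set m := p + 1 with hmdef
        have hDm := ih m (by omega)
        have hodd : D m % 2 = 1 := by rcases Nat.even_or_odd m with h | h <;> omega
        obtain ⟨t, ht⟩ : ∃ t, D m = 2*t + 1 := ⟨D m / 2, by omega⟩
        obtain ⟨u, hu⟩ : ∃ u, t * (t + 1) = u + u := (Int.even_mul_succ_self t)
        have hsq : D m * D m = 8 * u + 1 := by rw [ht]; linear_combination 4 * hu
        have hE := splitEven D m
        have h8 := (cMod8' m).1
        set s := ∑ k ∈ range m, D k * D (2*m - k) with hsdef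
        have hsig : s % 4 = (m : ℤ) % 4 := by
          rw [hsq] at hE
          omega
        have hs2 : s = (∑ k ∈ range p, D (k+1) * D (2*m - (k+1))) + D (2*m) := by
          rw [hsdef, Finset.sum_range_succ' (fun k : ℕ => D k * D (2*m - k)) p]
          simp [hD0]
        have hterm : ∀ k ∈ range p, (D (k+1) * D (2*m - (k+1))) % 4 = 1 := by
          intro k hk
          simp only [mem_range] at hk
          have h1 := ih (k+1) (by omega)
          have h2 := ih (2*m - (k+1)) (by omega)
          have hpar : (2*m - (k+1)) % 2 = (k+1) % 2 := by omega
          rw [Int.mul_emod]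
          rcases Nat.even_or_odd (k+1) with h | h
          · have e1 : (k+1) % 2 = 0 := Nat.even_iff.mp h
            rw [e1] at h1; rw [hpar, e1] at h2
            simp only [if_pos rfl] at h1 h2
            rw [h1, h2]; norm_num
          · have e1 : (k+1) % 2 = 1 := Nat.odd_iff.mp h
            rw [e1] at h1; rw [hpar, e1] at h2
            norm_num at h1 h2
            rw [h1, h2]; norm_num
        have hsum : (∑ k ∈ range p, D (k+1) * D (2*m - (k+1))) % 4 = (p : ℤ) % 4 := by
          rw [Finset.sum_int_mod, Finset.sum_congr rfl hterm]
          simp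
        have hgoal : D (2*m) % 4 = 1 := by omega
        simpa using hgoal
    · -- n = 2m+1
      subst hn
      have hO := splitOdd D m
      have h8 := (cMod8' m).2
      have hW : (∑ k ∈ range (m+1), D k * D (2*m+1 - k)) % 4 = (3 - (m:ℤ)) % 4 := by
        omega
      have hs2 : (∑ k ∈ range (m+1), D k * D (2*m+1 - k))
          = (∑ k ∈ range m, D (k+1) * D (2*m+1 - (k+1))) + D (2*m+1) := by
        rw [Finset.sum_range_succ' (fun k : ℕ => D k * D (2*m+1 - k)) m]
        simp [hD0]
      have hterm : ∀ k ∈ range m, (D (k+1) * D (2*m+1 - (k+1))) % 4 = 3 := by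
        intro k hk
        simp only [mem_range] at hk
        have h1 := ih (k+1) (by omega)
        have h2 := ih (2*m+1 - (k+1)) (by omega)
        have hpar : (2*m+1 - (k+1)) % 2 = 1 - (k+1) % 2 := by omega
        rw [Int.mul_emod]
        rcases Nat.even_or_odd (k+1) with h | h
        · have e1 : (k+1) % 2 = 0 := Nat.even_iff.mp h
          rw [e1] at h1; rw [hpar, e1] at h2
          norm_num at h1 h2
          rw [h1, h2]; norm_num
        · have e1 : (k+1) % 2 = 1 := Nat.odd_iff.mp h
          rw [e1] at h1; rw [hpar, e1] at h2
          norm_num at h1 h2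
          rw [h1, h2]; norm_num
      have hsum : (∑ k ∈ range m, D (k+1) * D (2*m+1 - (k+1))) % 4
          = (3 * (m:ℤ)) % 4 := by
        rw [Finset.sum_int_mod, Finset.sum_congr rfl hterm]
        rw [Finset.sum_const, Finset.card_range]
        push_cast
        ring_nf
      have hgoal : D (2*m+1) % 4 = 3 := by omega
      rw [if_neg (by omega : ¬ (2*m+1) % 2 = 0)]
      exact hgoal

include hD0 hD1 hDrec in
private theorem mainId : ∀ m : ℕ,
    8 * ∑ k ∈ range (m+1), (2 * (k:ℤ) + 1) * D k ^ 2
      = ((m:ℤ)+1)^2 * (6 * D (m+1) * D m - D (m+1)^2 - D m^2) := by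
  have recD' := recD D hD0 hD1 hDrec
  intro m
  induction m with
  | zero => simp [hD0, hD1]
  | succ p ih =>
    rw [Finset.sum_range_succ]
    have hrec := recD' (p+1)
    push_cast at hrec ⊢
    linear_combination ih + (((p:ℤ)+2) * D (p+1+1) - 3 * D (p+1) - ((p:ℤ)+1) * D p) * hrec

end Aux

/-- with `D` the central Delannoy numbers,
`8·Σ_{k<n} (2k+1)D(k)² = n²·(6D(n)D(n-1) - D(n)² - D(n-1)²)` for `n ≥ 1`; in
particular `(1/n²)·Σ_{k<n}(2k+1)D(k)² = (6D(n)D(n-1) - D(n)² - D(n-1)²)/8` is an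
integer. -/
theorem stmt19 (D : ℕ → ℤ) (hD0 : D 0 = 1) (hD1 : D 1 = 3)
    (hDrec : ∀ n : ℕ, 2 ≤ n →
      (n : ℤ) * D n = 3 * (2 * (n : ℤ) - 1) * D (n - 1) - ((n : ℤ) - 1) * D (n - 2)) :
    ∀ n : ℕ, 1 ≤ n →
      (8 * ∑ k ∈ Finset.range n, (2 * (k : ℤ) + 1) * D k ^ 2 =
        (n : ℤ) ^ 2 * (6 * D n * D (n - 1) - D n ^ 2 - D (n - 1) ^ 2)) ∧
      (∃ m : ℤ, ∑ k ∈ Finset.range n, (2 * (k : ℤ) + 1) * D k ^ 2 = (n : ℤ) ^ 2 * m ∧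
        8 * m = 6 * D n * D (n - 1) - D n ^ 2 - D (n - 1) ^ 2) := by
  intro n hn
  obtain ⟨p, rfl⟩ : ∃ p, n = p + 1 := ⟨n - 1, by omega⟩
  have e1 : p + 1 - 1 = p := by omega
  rw [e1]
  have hid := mainId D hD0 hD1 hDrec p
  have hid' : 8 * ∑ k ∈ Finset.range (p+1), (2 * (k : ℤ) + 1) * D k ^ 2 =
      ((p:ℕ)+1 : ℤ) ^ 2 * (6 * D (p+1) * D p - D (p+1) ^ 2 - D p ^ 2) := by
    push_cast
    exact hid
  constructor
  · push_cast
    exact hid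
  · -- divisibility
    have hd4 := dMod4 D hD0 hD1 hDrec
    have h1 := hd4 (p+1)
    have h2 := hd4 p
    have hparity : (p+1) % 2 = 1 - p % 2 := by omega
    have hsum4 : (4:ℤ) ∣ D (p+1) + D p := by
      rcases Nat.even_or_odd p with h | h
      · have e : p % 2 = 0 := Nat.even_iff.mp h
        rw [e] at h2; rw [hparity, e] at h1
        norm_num at h1 h2
        omega
      · have e : p % 2 = 1 := Nat.odd_iff.mp h
        rw [e] at h2; rw [hparity, e] at h1
        norm_num at h1 h2
        omega
    obtain ⟨t, ht⟩ := hsum4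
    have ha : D (p+1) = -D p + 4 * t := by linarith [ht]
    refine ⟨-(D p)^2 + 4*t*D p - 2*t^2, ?_, ?_⟩
    · have h8 : 8 * (6 * D (p+1) * D p - D (p+1) ^ 2 - D p ^ 2)
          = 8 * (8 * (-(D p)^2 + 4*t*D p - 2*t^2)) := by
        rw [ha]; ring
      have := hid'
      push_cast at this ⊢
      nlinarith [this, h8]
    · rw [ha]; ring
end
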